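/- arXiv:2510.27311 — 4 statements merged into one kernel-verified Lean document; each statement's English description precedes it below -/
import Mathlib

section
/- Let K, H ≤ ℍ^× be finite groups with [K,K] ≤ H ⊴ K, H ≠ {1}, and let λ be a partition of m with m < n. Then for any α ∈ K, the parabolic subgroup P_λ^α of G_n(K,H) is conjugate in G_n(K,H) to P_λ = P_λ^1. -/
noncomputable section

abbrev Hq := Quaternion ℝ

def pmat (n : ℕ) (σ : Equiv.Perm (Fin n)) : Matrix (Fin n) (Fin n) Hq :=
  Matrix.of fun i j => if i = σ j then 1 else 0

/-- Membership in `G_n(K,H) = A_n(K,H) ⋊ S_n`. -/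
def memG {n : ℕ} (K : Subgroup Hqˣ) (H : Subgroup ↥K) (g : (Matrix (Fin n) (Fin n) Hq)ˣ) : Prop :=
  ∃ (k : Fin n → ↥K) (σ : Equiv.Perm (Fin n)), (List.ofFn k).prod ∈ H ∧
    g.val = (Matrix.diagonal fun i => ((k i : Hqˣ) : Hq)) * pmat n σ

/-- The defining vectors of the parabolic subgroup `P_λ^α`. -/
def pvec (n : ℕ) (l : List ℕ) (α : Hq) (j : ℕ) : Fin n → Hq := fun i =>
  if (l.take j).sum ≤ (i : ℕ) ∧ (i : ℕ) < (l.take (j + 1)).sum then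
    (if (i : ℕ) = 0 then α else 1) else 0

/-- The parabolic subgroup `P_λ^α` of `G_n(K,H)` as the pointwise stabilizer of the
vectors `α e₁ + e₂ + ⋯ + e_{λ₁}, e_{λ₁+1} + ⋯, …` (here `λ` is a partition of `m ≤ n`, the
last `n - m` coordinates being free). -/
def Ppar {n : ℕ} (K : Subgroup Hqˣ) (H : Subgroup ↥K) (l : List ℕ) (α : Hq) :
    Set (Matrix (Fin n) (Fin n) Hq)ˣ :=
  {g | memG K H g ∧ ∀ j < l.length, g.val.mulVec (pvec n l α j) = pvec n l α j}

lemma pmat_one (n : ℕ) : pmat n 1 = 1 := by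
  refine Matrix.ext fun i j => ?_
  simp [pmat, Matrix.one_apply]
  exact if_congr Iff.rfl rfl rfl

lemma pmat_mul (n : ℕ) (σ τ : Equiv.Perm (Fin n)) : pmat n σ * pmat n τ = pmat n (σ * τ) := by
  refine Matrix.ext fun i j => ?_
  simp only [pmat, Matrix.mul_apply, Matrix.of_apply]
  rw [Finset.sum_eq_single (τ j)]
  · simp [Equiv.Perm.mul_apply]
    exact if_congr Iff.rfl rfl rfl
  · intro b _ hb; simp [hb]
  · simp

lemma pmat_mul_diagonal {n : ℕ} (σ : Equiv.Perm (Fin n)) (e : Fin n → Hq) :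
    pmat n σ * Matrix.diagonal e =
      Matrix.diagonal (fun i => e (σ⁻¹ i)) * pmat n σ := by
  refine Matrix.ext fun i j => ?_
  simp only [pmat, Matrix.mul_apply, Matrix.of_apply, Matrix.diagonal_apply]
  rw [Finset.sum_eq_single j (fun b _ hb => by simp [hb]) (by simp)]
  rw [Finset.sum_eq_single i (fun b _ hb => by simp [Ne.symm hb]) (by simp)]
  by_cases h : i = σ j
  · subst h; simp
  · simp [h]

lemma comm_quot {K : Subgroup Hqˣ} {H : Subgroup ↥K} [H.Normal]
    (hcomm : ∀ a b : ↥K, a * b * a⁻¹ * b⁻¹ ∈ H) (a b : ↥K ⧸ H) : a * b = b * a := by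
  obtain ⟨x, rfl⟩ := QuotientGroup.mk_surjective a
  obtain ⟨y, rfl⟩ := QuotientGroup.mk_surjective b
  rw [← QuotientGroup.mk_mul, ← QuotientGroup.mk_mul, QuotientGroup.eq]
  simpa [mul_assoc] using hcomm y⁻¹ x⁻¹

lemma memG_mul {n : ℕ} {K : Subgroup Hqˣ} {H : Subgroup ↥K} [H.Normal]
    (hcomm : ∀ a b : ↥K, a * b * a⁻¹ * b⁻¹ ∈ H)
    {g g' : (Matrix (Fin n) (Fin n) Hq)ˣ} (hg : memG K H g) (hg' : memG K H g') :
    memG K H (g * g') := by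
  obtain ⟨k, σ, hk, hval⟩ := hg
  obtain ⟨k', σ', hk', hval'⟩ := hg'
  letI : CommGroup (↥K ⧸ H) :=
    { (inferInstance : Group (↥K ⧸ H)) with mul_comm := comm_quot hcomm }
  refine ⟨fun i => k i * k' (σ⁻¹ i), σ * σ', ?_, ?_⟩
  · rw [← QuotientGroup.eq_one_iff]
    have hmap : ∀ (f : Fin n → ↥K),
        ((List.ofFn f).prod : ↥K ⧸ H) = ∏ i : Fin n, (f i : ↥K ⧸ H) := by
      intro f
      rw [show ((List.ofFn f).prod : ↥K ⧸ H) = (QuotientGroup.mk' H) (List.ofFn f).prod from rfl,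
        map_list_prod, List.map_ofFn, List.prod_ofFn]
      rfl
    rw [hmap]
    have h1 : ((List.ofFn k).prod : ↥K ⧸ H) = 1 := (QuotientGroup.eq_one_iff _).mpr hk
    have h2 : ((List.ofFn k').prod : ↥K ⧸ H) = 1 := (QuotientGroup.eq_one_iff _).mpr hk'
    rw [hmap] at h1 h2
    simp only [QuotientGroup.mk_mul]
    rw [Finset.prod_mul_distrib, h1, one_mul,
      Equiv.prod_comp σ⁻¹ (fun i => ((k' i : ↥K) : ↥K ⧸ H)), h2]
  · rw [Units.val_mul, hval, hval', mul_assoc, ← mul_assoc (pmat n σ), pmat_mul_diagonal,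
      mul_assoc, pmat_mul, ← mul_assoc, Matrix.diagonal_mul_diagonal]
    congr 1

lemma prodD (p : ℕ) {K : Subgroup Hqˣ} (a b : ↥K) :
    (List.ofFn (fun i : Fin (p+2) =>
      if (i : ℕ) = 0 then a else if (i : ℕ) = p + 1 then b else 1)).prod = a * b := by
  rw [List.ofFn_succ', List.prod_concat, List.ofFn_succ, List.prod_cons]
  have h1 : (List.ofFn fun i : Fin p =>
      (fun j : Fin (p+1) => if ((j.castSucc : Fin (p+2)) : ℕ) = 0 then a
        else if ((j.castSucc : Fin (p+2)) : ℕ) = p + 1 then b else 1) i.succ).prod = 1 := by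
    apply List.prod_eq_one
    intro c hc
    rw [List.mem_ofFn] at hc
    obtain ⟨i, rfl⟩ := hc
    simp only [Fin.coe_castSucc, Fin.val_succ]
    have h3 : (i : ℕ) + 1 ≠ p + 1 := by omega
    have h4 : (i : ℕ) ≠ p := by omega
    simp [h3, h4]
  simp only [Fin.val_last, Fin.coe_castSucc, Fin.val_succ, Fin.val_zero] at *
  rw [h1]
  simp

/-- for finite `K, H ≤ ℍ^×` with `[K,K] ≤ H ⊴ K`, `H ≠ {1}`, and a partition `λ`
of `m < n`, the parabolic `P_λ^α` is conjugate in `G_n(K,H)` to `P_λ = P_λ^1` for any `α ∈ K`. -/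
theorem stmt12 (n m : ℕ) (hmn : m < n) (K : Subgroup Hqˣ) (hK : Finite ↥K)
    (H : Subgroup ↥K) [H.Normal] (hH : H ≠ ⊥)
    (hcomm : ∀ a b : ↥K, a * b * a⁻¹ * b⁻¹ ∈ H)
    (l : List ℕ) (hpos : ∀ x ∈ l, 0 < x) (hsum : l.sum = m)
    (α : ↥K) :
    ∃ x : (Matrix (Fin n) (Fin n) Hq)ˣ, memG K H x ∧
      (fun g => x * g * x⁻¹) '' Ppar K H l ((α : Hqˣ) : Hq) = Ppar K H l 1 := by
  rcases eq_or_ne l [] with rfl | hl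
  · refine ⟨1, ⟨fun _ => 1, 1, ?_, ?_⟩, ?_⟩
    · simp only [List.ofFn_const, List.prod_replicate, one_pow]
      exact one_mem H
    · simp [pmat_one]
    · have hP : ∀ β : Hq, Ppar K H ([] : List ℕ) β = {g : (Matrix (Fin n) (Fin n) Hq)ˣ | memG K H g} := by
        intro β; ext g; simp [Ppar]
      rw [hP, hP]
      ext g; simp
  · -- now l ≠ [], so m ≥ 1 and n ≥ 2
    have hm1 : 1 ≤ m := by
      rcases l with _ | ⟨a, l'⟩
      · exact absurd rfl hl
      · have := hpos a (by simp); simp at hsum; omega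
    obtain ⟨p, rfl⟩ : ∃ p, n = p + 2 := ⟨n - 2, by omega⟩
    set d : Fin (p+2) → ↥K := fun i =>
      if (i : ℕ) = 0 then α⁻¹ else if (i : ℕ) = p + 1 then α else 1 with hd
    have hdinv : (fun i => (d i)⁻¹) = fun i : Fin (p+2) =>
        if (i : ℕ) = 0 then α else if (i : ℕ) = p + 1 then α⁻¹ else 1 := by
      funext i
      by_cases h0 : (i : ℕ) = 0
      · simp [hd, h0, show i = 0 from Fin.ext (by simp [h0])]
      · by_cases h1 : (i : ℕ) = p + 1 <;> simp [hd, h0, h1, show i ≠ 0 from fun h => h0 (by simp [h])]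
    have hDD : ∀ (e : Fin (p+2) → ↥K),
        (Matrix.diagonal fun i => ((e i : Hqˣ) : Hq)) *
          (Matrix.diagonal fun i => ((((e i)⁻¹ : ↥K) : Hqˣ) : Hq)) = 1 := by
      intro e
      rw [Matrix.diagonal_mul_diagonal]
      have h2 : (fun i => ((e i : Hqˣ) : Hq) * ((((e i)⁻¹ : ↥K) : Hqˣ) : Hq))
          = fun _ => (1 : Hq) := by
        funext i
        rw [← Units.val_mul]
        norm_cast
        simp
      rw [h2, Matrix.diagonal_one]
    set x : (Matrix (Fin (p+2)) (Fin (p+2)) Hq)ˣ :=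
      ⟨Matrix.diagonal fun i => ((d i : Hqˣ) : Hq),
       Matrix.diagonal fun i => ((((d i)⁻¹ : ↥K) : Hqˣ) : Hq),
       hDD d, by
        have := hDD (fun i => (d i)⁻¹)
        simpa using this⟩ with hx
    have hxval : x.val = Matrix.diagonal fun i => ((d i : Hqˣ) : Hq) := rfl
    have hxinvval : (x⁻¹).val = Matrix.diagonal fun i => ((((d i)⁻¹ : ↥K) : Hqˣ) : Hq) := rfl
    have hmemx : memG K H x := by
      refine ⟨d, 1, ?_, ?_⟩
      · rw [hd, prodD]
        simpa using one_mem H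
      · rw [hxval, pmat_one, mul_one]
    have hmemxinv : memG K H x⁻¹ := by
      refine ⟨fun i => (d i)⁻¹, 1, ?_, ?_⟩
      · rw [hdinv, prodD]
        simpa using one_mem H
      · rw [hxinvval, pmat_one, mul_one]
    -- vector transport
    have htake : ∀ j, (l.take (j+1)).sum ≤ l.sum :=
      fun j => List.Sublist.sum_le_sum (List.take_sublist _ _) (fun a _ => Nat.zero_le a)
    have hvec : ∀ j < l.length,
        x.val.mulVec (pvec (p+2) l ((α : Hqˣ) : Hq) j) = pvec (p+2) l 1 j := by
      intro j hj
      funext i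
      rw [hxval, Matrix.mulVec_diagonal]
      unfold pvec
      by_cases hc : (l.take j).sum ≤ (i : ℕ) ∧ (i : ℕ) < (l.take (j+1)).sum
      · rw [if_pos hc, if_pos hc]
        by_cases hi : (i : ℕ) = 0
        · rw [if_pos hi, if_pos hi]
          have hdi : d i = α⁻¹ := by simp [hd, hi, show i = 0 from Fin.ext (by simp [hi])]
          rw [hdi, ← Units.val_mul]
          norm_cast
          simp
        · rw [if_neg hi, if_neg hi]
          have hilt : (i : ℕ) < m := lt_of_lt_of_le hc.2 (hsum ▸ htake j)
          have hine : (i : ℕ) ≠ p + 1 := by omega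
          have hdi : d i = 1 := by simp [hd, hi, hine, show i ≠ 0 from fun h => hi (by simp [h])]
          rw [hdi]
          simp
      · rw [if_neg hc, if_neg hc, mul_zero]
    have hvec' : ∀ j < l.length,
        (x⁻¹).val.mulVec (pvec (p+2) l 1 j) = pvec (p+2) l ((α : Hqˣ) : Hq) j := by
      intro j hj
      rw [← hvec j hj, Matrix.mulVec_mulVec, ← Units.val_mul, inv_mul_cancel, Units.val_one,
        Matrix.one_mulVec]
    -- conjugation key lemma
    have key : ∀ (β γ : Hq) (y : (Matrix (Fin (p+2)) (Fin (p+2)) Hq)ˣ),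
        memG K H y → memG K H y⁻¹ →
        (∀ j < l.length, y.val.mulVec (pvec (p+2) l β j) = pvec (p+2) l γ j) →
        (∀ j < l.length, (y⁻¹).val.mulVec (pvec (p+2) l γ j) = pvec (p+2) l β j) →
        ∀ a ∈ Ppar K H l β, y * a * y⁻¹ ∈ Ppar K H l γ := by
      intro β γ y hy hyi hv hv' a ha
      refine ⟨memG_mul hcomm (memG_mul hcomm hy ha.1) hyi, ?_⟩
      intro j hj
      rw [Units.val_mul, Units.val_mul, ← Matrix.mulVec_mulVec, ← Matrix.mulVec_mulVec,
        hv' j hj, ha.2 j hj, hv j hj]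
    refine ⟨x, hmemx, ?_⟩
    ext g
    constructor
    · rintro ⟨a, ha, rfl⟩
      exact key _ _ x hmemx hmemxinv hvec hvec' a ha
    · intro hg
      refine ⟨x⁻¹ * g * x, ?_, ?_⟩
      · have := key 1 ((α : Hqˣ) : Hq) x⁻¹ hmemxinv (by rw [inv_inv]; exact hmemx)
          hvec' (by rw [inv_inv]; exact hvec) g hg
        rwa [inv_inv] at this
      · show x * (x⁻¹ * g * x) * x⁻¹ = g
        group
end
end

section
/- Let K, H ≤ ℍ^× be finite groups with [K,K] ≤ H ⊴ K and H ≠ {1}. Then the poset of parabolic subgroups of G_n(K,H), ordered by inclusion, is isomorphic to the Dowling lattice 𝒟_n(K) of rank n over the group K. -/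
noncomputable section

/-- The pointwise stabilizer in `G_n(K,H)` of a subset of `ℍⁿ` (a parabolic subgroup). -/
def stabSet {n : ℕ} (K : Subgroup Hqˣ) (H : Subgroup ↥K) (S : Set (Fin n → Hq)) :
    Set (Matrix (Fin n) (Fin n) Hq)ˣ :=
  {g | memG K H g ∧ ∀ v ∈ S, g.val.mulVec v = v}

/-- Raw data for an element of the Dowling lattice `𝒟_n(K)`: a zero set `Z` and a `K`-valued
partial cocycle `g` recording, for `i, j` in a common block, the relative `K`-coordinate. -/
structure DowRaw (n : ℕ) (K : Type*) [Group K] where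
  Z : Finset (Fin n)
  g : Fin n → Fin n → Option K

/-- The conditions making a `DowRaw` a genuine partial `K`-partition of `{1,…,n}` (an element
of the Dowling lattice): blocks partition the complement of `Z`, and the `K`-labels form a
groupoid cocycle (this encodes the block decorations `ξ` modulo left translation by `K`). -/
def IsDow {n : ℕ} {K : Type*} [Group K] (p : DowRaw n K) : Prop :=
  (∀ i, i ∉ p.Z → p.g i i = some 1) ∧
  (∀ i ∈ p.Z, ∀ j, p.g i j = none ∧ p.g j i = none) ∧
  (∀ i j a, p.g i j = some a → p.g j i = some a⁻¹) ∧
  (∀ i j l a b, p.g i j = some a → p.g j l = some b → p.g i l = some (a * b))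

/-- The Dowling lattice `𝒟_n(K)`. -/
def Dow (n : ℕ) (K : Type*) [Group K] := {p : DowRaw n K // IsDow p}

/-- The Dowling lattice order: coarsening of partial partitions (blocks may merge, compatibly
with the `K`-labels, or be absorbed into the zero block). -/
def dowLe {n : ℕ} {K : Type*} [Group K] (p q : Dow n K) : Prop :=
  p.val.Z ⊆ q.val.Z ∧
  ∀ i j a, p.val.g i j = some a → ((i ∈ q.val.Z ∧ j ∈ q.val.Z) ∨ q.val.g i j = some a)

namespace Aux13

/-! ### Matrix layer -/

variable {n : ℕ} {K : Subgroup Hqˣ}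

lemma coeK_inj {a b : ↥K} (h : ((a : Hqˣ) : Hq) = ((b : Hqˣ) : Hq)) : a = b :=
  Subtype.ext (Units.ext h)

lemma pmat_mul (σ τ : Equiv.Perm (Fin n)) : pmat n σ * pmat n τ = pmat n (σ * τ) := by
  refine Matrix.ext fun i j => ?_
  simp only [pmat, Matrix.mul_apply, Matrix.of_apply, ite_mul, one_mul, zero_mul]
  have : ∀ x : Fin n, (if i = σ x then (if x = τ j then (1:Hq) else 0) else 0)
      = (if x = σ.symm i then (if x = τ j then (1:Hq) else 0) else 0) := by
    intro x
    congr 1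
    simp [Equiv.eq_symm_apply, eq_comm]
  rw [Finset.sum_congr rfl fun x _ => this x,
    Finset.sum_ite_eq' Finset.univ (σ.symm i) (fun x => if x = τ j then (1:Hq) else 0)]
  by_cases hc : i = σ (τ j) <;>
    simp [hc, Equiv.symm_apply_eq, Equiv.eq_symm_apply, Equiv.Perm.mul_apply]

lemma pmat_one : pmat n 1 = 1 := by
  refine Matrix.ext fun i j => ?_
  simp [pmat, Matrix.one_apply, eq_comm]
  by_cases h : i = j <;> simp [h]

def dmat (k : Fin n → ↥K) : Matrix (Fin n) (Fin n) Hq :=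
  Matrix.diagonal fun i => ((k i : Hqˣ) : Hq)

lemma dmat_mul_dmat (k k' : Fin n → ↥K) : dmat k * dmat k' = dmat (k * k') := by
  simp [dmat, Matrix.diagonal_mul_diagonal]

lemma dmat_one : dmat (1 : Fin n → ↥K) = 1 := by
  simp [dmat]

def gunit (k : Fin n → ↥K) (σ : Equiv.Perm (Fin n)) : (Matrix (Fin n) (Fin n) Hq)ˣ where
  val := dmat k * pmat n σ
  inv := pmat n σ⁻¹ * dmat (k⁻¹)
  val_inv := by
    have h : pmat n σ * (pmat n σ⁻¹ * dmat (k⁻¹)) = dmat (k⁻¹) := by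
      rw [← mul_assoc, pmat_mul, mul_inv_cancel, pmat_one, one_mul]
    rw [mul_assoc, h, dmat_mul_dmat, mul_inv_cancel, dmat_one]
  inv_val := by
    have h : dmat (k⁻¹) * (dmat k * pmat n σ) = pmat n σ := by
      rw [← mul_assoc, dmat_mul_dmat, inv_mul_cancel, dmat_one, one_mul]
    rw [mul_assoc, h, pmat_mul, inv_mul_cancel, pmat_one]

lemma mulVec_apply (k : Fin n → ↥K) (σ : Equiv.Perm (Fin n)) (v : Fin n → Hq) (i : Fin n) :
    (dmat k * pmat n σ).mulVec v i = ((k i : Hqˣ) : Hq) * v (σ⁻¹ i) := by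
  simp only [Matrix.mulVec, dotProduct, dmat, Matrix.diagonal_mul, pmat, Matrix.of_apply,
    mul_ite, mul_one, mul_zero, ite_mul, zero_mul]
  have : ∀ x : Fin n, (if i = σ x then ((k i : Hqˣ) : Hq) * v x else 0)
      = (if x = σ.symm i then ((k i : Hqˣ) : Hq) * v x else 0) := by
    intro x; congr 1; simp [Equiv.eq_symm_apply, eq_comm]
  rw [Finset.sum_congr rfl fun x _ => this x,
    Finset.sum_ite_eq' Finset.univ (σ.symm i) (fun x => ((k i : Hqˣ) : Hq) * v x)]
  simp

lemma kne (a : ↥K) : ((a : Hqˣ) : Hq) ≠ 0 := Units.ne_zero _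

lemma decomp_unique {k k' : Fin n → ↥K} {σ σ' : Equiv.Perm (Fin n)}
    (h : dmat k * pmat n σ = dmat k' * pmat n σ') : σ = σ' ∧ k = k' := by
  have hσ : σ = σ' := by
    ext j
    by_contra hne0
    have hne : σ j ≠ σ' j := fun hh => hne0 (congrArg Fin.val hh)
    have := congrFun (congrFun h (σ j)) j
    simp only [dmat, pmat, Matrix.diagonal_mul, Matrix.of_apply, mul_ite, mul_one,
      mul_zero] at this
    rw [if_neg hne, if_pos trivial] at this
    exact kne (k (σ j)) this
  subst hσ
  refine ⟨rfl, funext fun i => ?_⟩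
  have := congrFun (congrFun h i) (σ⁻¹ i)
  simp [dmat, pmat, Matrix.diagonal_mul, Equiv.Perm.inv_def, Equiv.apply_symm_apply] at this
  exact coeK_inj this

/-! ### List product lemmas -/

lemma prod_ofFn_single {M : Type*} [Monoid M] :
    ∀ {n : ℕ} (f : Fin n → M) (i : Fin n), (∀ j, j ≠ i → f j = 1) →
      (List.ofFn f).prod = f i := by
  intro n
  induction n with
  | zero => exact fun f i _ => i.elim0
  | succ m ih =>
    intro f i h
    rw [List.ofFn_succ, List.prod_cons]
    induction i using Fin.cases with
    | zero =>
      have : (List.ofFn fun j : Fin m => f j.succ).prod = 1 := by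
        apply List.prod_eq_one
        intro x hx
        obtain ⟨j, rfl⟩ := List.mem_ofFn.mp hx
        exact h _ (Fin.succ_ne_zero j)
      rw [this, mul_one]
    | succ i' =>
      rw [h 0 (Ne.symm (Fin.succ_ne_zero i')), one_mul]
      exact ih _ i' fun j hj => h _ (fun hc => hj (Fin.succ_injective _ hc))

lemma prod_ofFn_pair {M : Type*} [Monoid M] :
    ∀ {n : ℕ} (f : Fin n → M) (i j : Fin n), i < j → (∀ l, l ≠ i → l ≠ j → f l = 1) →
      (List.ofFn f).prod = f i * f j := by
  intro n
  induction n with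
  | zero => exact fun f i _ _ _ => i.elim0
  | succ m ih =>
    intro f i j hij h
    have hj0 : j ≠ 0 := fun hc => Fin.not_lt_zero i (hc ▸ hij)
    obtain ⟨j', rfl⟩ := Fin.exists_succ_eq.mpr hj0
    rw [List.ofFn_succ, List.prod_cons]
    induction i using Fin.cases with
    | zero =>
      congr 1
      exact prod_ofFn_single _ j' fun l hl =>
        h _ (Fin.succ_ne_zero l) (fun hc => hl (Fin.succ_injective _ hc))
    | succ i' =>
      rw [h 0 (Ne.symm (Fin.succ_ne_zero i')) (Ne.symm (Fin.succ_ne_zero j')), one_mul]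
      exact ih _ i' j' (by simpa [Fin.succ_lt_succ_iff] using hij) fun l hl1 hl2 =>
        h _ (fun hc => hl1 (Fin.succ_injective _ hc)) (fun hc => hl2 (Fin.succ_injective _ hc))

/-! ### The Dowling element attached to a set of vectors -/

open Classical in
noncomputable def dowOf (K : Subgroup Hqˣ) {n : ℕ} (S : Set (Fin n → Hq)) : DowRaw n ↥K where
  Z := Finset.univ.filter fun i => ∀ v ∈ S, v i = 0
  g i j := if h : (∃ v ∈ S, v i ≠ 0) ∧ ∃ a : ↥K, ∀ v ∈ S, v i = ((a : Hqˣ) : Hq) * v j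
    then some h.2.choose else none

variable {S : Set (Fin n → Hq)}

lemma mem_dowZ {i : Fin n} : i ∈ (dowOf K S).Z ↔ ∀ v ∈ S, v i = 0 := by
  simp [dowOf]

lemma label_unique {i j : Fin n} {a b : ↥K} (hne : ∃ v ∈ S, v i ≠ 0)
    (ha : ∀ v ∈ S, v i = ((a : Hqˣ) : Hq) * v j) (hb : ∀ v ∈ S, v i = ((b : Hqˣ) : Hq) * v j) :
    a = b := by
  obtain ⟨v, hv, hvi⟩ := hne
  have hvj : v j ≠ 0 := by
    intro hc
    exact hvi (by rw [ha v hv, hc, mul_zero])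
  apply coeK_inj
  have := (ha v hv).symm.trans (hb v hv)
  exact mul_right_cancel₀ hvj this

lemma dowOf_g_eq_some_iff {i j : Fin n} {a : ↥K} :
    (dowOf K S).g i j = some a ↔
      (∃ v ∈ S, v i ≠ 0) ∧ ∀ v ∈ S, v i = ((a : Hqˣ) : Hq) * v j := by
  constructor
  · intro h
    simp only [dowOf] at h
    split at h
    · rename_i hc
      obtain ⟨h1, h2⟩ := hc
      have hsp := h2.choose_spec
      have : h2.choose = a := Option.some_injective _ h
      exact ⟨h1, this ▸ hsp⟩
    · exact absurd h (by simp)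
  · rintro ⟨h1, h2⟩
    have hc : (∃ v ∈ S, v i ≠ 0) ∧ ∃ a : ↥K, ∀ v ∈ S, v i = ((a : Hqˣ) : Hq) * v j :=
      ⟨h1, a, h2⟩
    simp only [dowOf, dif_pos hc]
    exact congrArg some (label_unique h1 hc.2.choose_spec h2)

lemma dowOf_g_eq_none_iff {i j : Fin n} :
    (dowOf K S).g i j = none ↔
      ¬((∃ v ∈ S, v i ≠ 0) ∧ ∃ a : ↥K, ∀ v ∈ S, v i = ((a : Hqˣ) : Hq) * v j) := by
  constructor
  · intro h hc
    rw [dowOf_g_eq_some_iff.mpr ⟨hc.1, hc.2.choose_spec⟩] at h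
    exact Option.some_ne_none _ h
  · intro hc
    simp only [dowOf, dif_neg hc]

lemma isDow_dowOf : IsDow (dowOf K S) := by
  refine ⟨?_, ?_, ?_, ?_⟩
  · intro i hi
    rw [mem_dowZ] at hi
    push_neg at hi
    exact dowOf_g_eq_some_iff.mpr ⟨hi, fun v _ => by simp⟩
  · intro i hi j
    rw [mem_dowZ] at hi
    constructor
    · rw [dowOf_g_eq_none_iff]
      rintro ⟨⟨v, hv, hvi⟩, -⟩
      exact hvi (hi v hv)
    · rw [dowOf_g_eq_none_iff]
      rintro ⟨⟨v, hv, hvj⟩, a, ha⟩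
      exact hvj (by rw [ha v hv, hi v hv, mul_zero])
  · intro i j a h
    rw [dowOf_g_eq_some_iff] at h ⊢
    obtain ⟨⟨v, hv, hvi⟩, ha⟩ := h
    have hvj : v j ≠ 0 := fun hc => hvi (by rw [ha v hv, hc, mul_zero])
    refine ⟨⟨v, hv, hvj⟩, fun w hw => ?_⟩
    have := ha w hw
    have : ((a : Hqˣ) : Hq)⁻¹ * w i = w j := by
      rw [this, ← mul_assoc, inv_mul_cancel₀ (Units.ne_zero _), one_mul]
    rw [← this]
    congr 1
    simp
  · intro i j l a b hij hjl
    rw [dowOf_g_eq_some_iff] at hij hjl ⊢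
    refine ⟨hij.1, fun v hv => ?_⟩
    rw [hij.2 v hv, hjl.2 v hv, ← mul_assoc]
    congr 1

/-! ### The parabolic subgroup attached to a Dowling element -/

def Pset (K : Subgroup Hqˣ) (H : Subgroup ↥K) {n : ℕ} (d : Dow n ↥K) :
    Set (Matrix (Fin n) (Fin n) Hq)ˣ :=
  {g | ∃ (k : Fin n → ↥K) (σ : Equiv.Perm (Fin n)), (List.ofFn k).prod ∈ H ∧
    g.val = dmat k * pmat n σ ∧
    ∀ i, i ∉ d.val.Z → σ⁻¹ i ∉ d.val.Z ∧ d.val.g i (σ⁻¹ i) = some (k i)}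

lemma perm_compl {σ : Equiv.Perm (Fin n)} {Z : Finset (Fin n)}
    (h : ∀ i, i ∉ Z → σ⁻¹ i ∉ Z) : ∀ i, i ∈ Z → σ⁻¹ i ∈ Z := by
  classical
  have hsub : Finset.image (fun i => σ⁻¹ i) Zᶜ ⊆ Zᶜ := by
    intro x hx
    obtain ⟨m, hm, rfl⟩ := Finset.mem_image.mp hx
    exact Finset.mem_compl.mpr (h m (Finset.mem_compl.mp hm))
  have hcard : (Finset.image (fun i => σ⁻¹ i) Zᶜ).card = Zᶜ.card :=
    Finset.card_image_of_injective _ (σ⁻¹).injective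
  have heq := Finset.eq_of_subset_of_card_le hsub (le_of_eq hcard.symm)
  intro i hi
  by_contra hc
  have : σ⁻¹ i ∈ Zᶜ := Finset.mem_compl.mpr hc
  rw [← heq] at this
  obtain ⟨m, hm, hmi⟩ := Finset.mem_image.mp this
  have : i = m := σ⁻¹.injective hmi.symm
  exact (Finset.mem_compl.mp hm) (this ▸ hi)

lemma stab_eq (H : Subgroup ↥K) (S : Set (Fin n → Hq)) :
    stabSet K H S = Pset K H ⟨dowOf K S, isDow_dowOf⟩ := by
  ext g
  constructor
  · rintro ⟨⟨k, σ, hp, heq⟩, hfix⟩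
    replace heq : g.val = dmat k * pmat n σ := heq
    have hall : ∀ i, ∀ v ∈ S, v i = ((k i : Hqˣ) : Hq) * v (σ⁻¹ i) := by
      intro i v hv
      have := congrFun (hfix v hv) i
      rw [heq] at this
      rw [← this, mulVec_apply]
    refine ⟨k, σ, hp, heq, fun i hi => ?_⟩
    rw [mem_dowZ] at hi
    push_neg at hi
    have hσi : σ⁻¹ i ∉ (dowOf K S).Z := by
      rw [mem_dowZ]
      intro hc
      obtain ⟨v, hv, hvi⟩ := hi
      exact hvi (by rw [hall i v hv, hc v hv, mul_zero])
    exact ⟨hσi, dowOf_g_eq_some_iff.mpr ⟨hi, hall i⟩⟩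
  · rintro ⟨k, σ, hp, heq, hlbl⟩
    refine ⟨⟨k, σ, hp, by exact heq⟩, fun v hv => funext fun i => ?_⟩
    rw [heq, mulVec_apply]
    by_cases hi : i ∈ (dowOf K S).Z
    · have hσi : σ⁻¹ i ∈ (dowOf K S).Z := perm_compl (fun j hj => (hlbl j hj).1) i hi
      rw [mem_dowZ] at hi hσi
      rw [hσi v hv, mul_zero, hi v hv]
    · have := (dowOf_g_eq_some_iff.mp (hlbl i hi).2).2 v hv
      exact this.symm

/-! ### Realizing a Dowling element by a set of vectors -/

def vvec (d : DowRaw n ↥K) (j : Fin n) : Fin n → Hq :=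
  fun i => (d.g i j).elim 0 fun a => ((a : Hqˣ) : Hq)

def Sof (d : DowRaw n ↥K) : Set (Fin n → Hq) :=
  {v | ∃ j, j ∉ d.Z ∧ v = vvec d j}

lemma DowRaw.ext' {p q : DowRaw n ↥K} (h1 : p.Z = q.Z) (h2 : p.g = q.g) : p = q := by
  cases p; cases q
  simp only at h1 h2
  rw [h1, h2]

lemma dowOf_Sof {d : DowRaw n ↥K} (hd : IsDow d) : dowOf K (Sof d) = d := by
  obtain ⟨hd1, hd2, hd3, hd4⟩ := hd
  have memZ : ∀ i, i ∈ (dowOf K (Sof d)).Z ↔ i ∈ d.Z := by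
    intro i
    rw [mem_dowZ]
    constructor
    · intro h
      by_contra hc
      have := h (vvec d i) ⟨i, hc, rfl⟩
      rw [vvec, hd1 i hc] at this
      simp at this
    · intro hi v hv
      obtain ⟨j, hj, rfl⟩ := hv
      rw [vvec, (hd2 i hi j).1]
      rfl
  apply DowRaw.ext'
  · ext i; exact memZ i
  · funext i j
    cases h : d.g i j with
    | some a =>
      have hjZ : j ∉ d.Z := by
        intro hc
        rw [(hd2 j hc i).2] at h
        exact nomatch h
      apply dowOf_g_eq_some_iff.mpr
      constructor
      · refine ⟨vvec d j, ⟨j, hjZ, rfl⟩, ?_⟩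
        rw [vvec, h]
        exact Units.ne_zero _
      · rintro v ⟨l, hl, rfl⟩
        cases h2 : d.g j l with
        | some b =>
          have := hd4 i j l a b h h2
          simp only [vvec, this, h2, Option.elim]
          push_cast
          rfl
        | none =>
          have hil : d.g i l = none := by
            cases h3 : d.g i l with
            | none => rfl
            | some c =>
              have hji := hd3 i j a h
              have := hd4 j i l a⁻¹ c hji h3
              rw [h2] at this
              exact nomatch this
          simp [vvec, hil, h2]
    | none =>
      apply dowOf_g_eq_none_iff.mpr
      rintro ⟨⟨v, ⟨l, hl, rfl⟩, hvi⟩, b, hb⟩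
      cases h3 : d.g i l with
      | none => exact hvi (by simp [vvec, h3])
      | some c =>
        cases h2 : d.g j l with
        | some e =>
          have hlj := hd3 j l e h2
          have := hd4 i l j c e⁻¹ h3 hlj
          rw [h] at this
          exact nomatch this
        | none =>
          have := hb (vvec d l) ⟨l, hl, rfl⟩
          simp only [vvec, h3, h2, Option.elim] at this
          exact Units.ne_zero ((c : Hqˣ)) (by simpa using this)

lemma stab_Sof (H : Subgroup ↥K) (d : Dow n ↥K) : stabSet K H (Sof d.val) = Pset K H d := by
  rw [stab_eq]
  have hd : (⟨dowOf K (Sof d.val), isDow_dowOf⟩ : Dow n ↥K) = d :=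
    Subtype.ext (dowOf_Sof d.prop)
  rw [hd]

/-! ### Order correspondence -/

lemma Pset_mono (H : Subgroup ↥K) {d d' : Dow n ↥K} (h : dowLe d d') :
    Pset K H d ⊆ Pset K H d' := by
  rintro g ⟨k, σ, hp, heq, hlbl⟩
  refine ⟨k, σ, hp, heq, fun i hi => ?_⟩
  have hiZ : i ∉ d.val.Z := fun hc => hi (h.1 hc)
  obtain ⟨hσ, hg⟩ := hlbl i hiZ
  rcases h.2 i (σ⁻¹ i) (k i) hg with ⟨hc, _⟩ | hg'
  · exact absurd hc hi
  · refine ⟨?_, hg'⟩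
    intro hc
    rw [(d'.prop.2.1 i ?_ (σ⁻¹ i)).1] at hg'
    · exact nomatch hg'
    · exact absurd (d'.prop.2.1 (σ⁻¹ i) hc i).2 (by rw [hg']; simp)

lemma Pset_reflect (H : Subgroup ↥K) (hH : H ≠ ⊥) {d d' : Dow n ↥K}
    (h : Pset K H d ⊆ Pset K H d') : dowLe d d' := by
  obtain ⟨h₀, hne⟩ := Subgroup.ne_bot_iff_exists_ne_one.mp hH
  have hh0 : (h₀ : ↥K) ∈ H := h₀.2
  have hh0ne : (h₀ : ↥K) ≠ 1 := fun hc => hne (Subtype.ext hc)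
  constructor
  · intro i hi
    set k : Fin n → ↥K := fun j => if j = i then (h₀ : ↥K) else 1 with hk
    have hmem : gunit k 1 ∈ Pset K H d := by
      refine ⟨k, 1, ?_, rfl, fun l hl => ?_⟩
      · rw [prod_ofFn_single k i fun j hj => if_neg hj]
        simpa [hk] using hh0
      · have hli : l ≠ i := fun hc => hl (hc ▸ hi)
        simp only [inv_one, Equiv.Perm.one_apply]
        exact ⟨hl, by rw [d.prop.1 l hl]; simp [hk, hli]⟩
    obtain ⟨k', σ', hp', heq', hlbl'⟩ := h hmem
    obtain ⟨hσ, hkk⟩ := decomp_unique heq'.symm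
    subst hσ; subst hkk
    by_contra hc
    have := (hlbl' i hc).2
    simp only [inv_one, Equiv.Perm.one_apply] at this
    rw [d'.prop.1 i hc] at this
    have : (1 : ↥K) = k i := Option.some_injective _ this
    rw [hk] at this
    simp only [if_pos rfl] at this
    exact hh0ne this.symm
  · intro i j a hij
    have hiZ : i ∉ d.val.Z := fun hc => by
      rw [(d.prop.2.1 i hc j).1] at hij; exact nomatch hij
    have hjZ : j ∉ d.val.Z := fun hc => by
      rw [(d.prop.2.1 j hc i).2] at hij; exact nomatch hij
    by_cases hija : i = j
    · subst hija
      have ha1 : a = 1 := by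
        rw [d.prop.1 i hiZ] at hij
        exact (Option.some_injective _ hij).symm
      subst ha1
      by_cases hi' : i ∈ d'.val.Z
      · exact Or.inl ⟨hi', hi'⟩
      · exact Or.inr (d'.prop.1 i hi')
    · set k : Fin n → ↥K := fun l => if l = i then a else if l = j then a⁻¹ else 1 with hk
      set σ := Equiv.swap i j with hσdef
      have hki : k i = a := by simp [hk]
      have hkj : k j = a⁻¹ := by simp [hk, hija, Ne.symm hija]
      have hprod : (List.ofFn k).prod ∈ H := by
        have hother : ∀ l, l ≠ i → l ≠ j → k l = 1 := fun l h1 h2 => by simp [hk, h1, h2]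
        rcases lt_or_gt_of_ne (fun hc : i = j => hija hc) with hlt | hgt
        · rw [prod_ofFn_pair k i j hlt hother, hki, hkj, mul_inv_cancel]
          exact H.one_mem
        · rw [prod_ofFn_pair k j i hgt (fun l h1 h2 => hother l h2 h1), hki, hkj,
            inv_mul_cancel]
          exact H.one_mem
      have hdg_ji : d.val.g j i = some a⁻¹ := d.prop.2.2.1 i j a hij
      have hmem : gunit k σ ∈ Pset K H d := by
        refine ⟨k, σ, hprod, rfl, fun l hl => ?_⟩
        rw [hσdef]
        simp only [Equiv.swap_inv]
        by_cases hli : l = i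
        · subst hli
          rw [Equiv.swap_apply_left]
          exact ⟨hjZ, by rw [hij, hki]⟩
        · by_cases hlj : l = j
          · subst hlj
            rw [Equiv.swap_apply_right]
            exact ⟨hiZ, by rw [hdg_ji, hkj]⟩
          · rw [Equiv.swap_apply_of_ne_of_ne hli hlj]
            exact ⟨hl, by rw [d.prop.1 l hl]; simp [hk, hli, hlj]⟩
      obtain ⟨k', σ', hp', heq', hlbl'⟩ := h hmem
      obtain ⟨hσ, hkk⟩ := decomp_unique heq'.symm
      subst hσ; subst hkk
      by_cases hi' : i ∈ d'.val.Z
      · left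
        refine ⟨hi', ?_⟩
        by_contra hj'
        have := (hlbl' j hj').1
        rw [hσdef] at this
        simp only [Equiv.swap_inv, Equiv.swap_apply_right] at this
        exact this hi'
      · right
        have := (hlbl' i hi').2
        rw [hσdef] at this
        simp only [Equiv.swap_inv, Equiv.swap_apply_left] at this
        rw [this, hki]

lemma dowLe_antisymm {d d' : Dow n ↥K} (h : dowLe d d') (h' : dowLe d' d) : d = d' := by
  have hZ : d.val.Z = d'.val.Z := Finset.Subset.antisymm h.1 h'.1
  apply Subtype.ext
  apply DowRaw.ext' hZ
  funext i j
  cases hg : d.val.g i j with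
  | some a =>
    rcases h.2 i j a hg with ⟨hi, _⟩ | hgood
    · have hi2 : i ∈ d.val.Z := hZ.symm ▸ hi
      rw [(d.prop.2.1 i hi2 j).1] at hg
      exact nomatch hg
    · exact hgood.symm
  | none =>
    cases hg' : d'.val.g i j with
    | none => rfl
    | some a =>
      rcases h'.2 i j a hg' with ⟨hi, _⟩ | hgood
      · have hi2 : i ∈ d'.val.Z := hZ ▸ hi
        rw [(d'.prop.2.1 i hi2 j).1] at hg'
        exact nomatch hg'
      · rw [hgood] at hg
        exact nomatch hg

end Aux13

theorem stmt13 (n : ℕ) (K : Subgroup Hqˣ) (hK : Finite ↥K)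
    (H : Subgroup ↥K) [H.Normal] (hH : H ≠ ⊥)
    (hcomm : ∀ a b : ↥K, a * b * a⁻¹ * b⁻¹ ∈ H) :
    ∃ φ : ↥{Q : Set (Matrix (Fin n) (Fin n) Hq)ˣ | ∃ S, Q = stabSet K H S} ≃ Dow n ↥K,
      ∀ P Q, P.val ⊆ Q.val ↔ dowLe (φ P) (φ Q) := by
  classical
  set T := {Q : Set (Matrix (Fin n) (Fin n) Hq)ˣ | ∃ S, Q = stabSet K H S} with hT
  have hle_iff : ∀ d d' : Dow n ↥K,
      Aux13.Pset K H d ⊆ Aux13.Pset K H d' ↔ dowLe d d' :=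
    fun d d' => ⟨Aux13.Pset_reflect H hH, Aux13.Pset_mono H⟩
  have hPinj : Function.Injective (Aux13.Pset K H (n := n)) := by
    intro d d' hdd
    exact Aux13.dowLe_antisymm ((hle_iff d d').mp hdd.le)
      ((hle_iff d' d).mp hdd.ge)
  have hQP : ∀ Q : ↥T, Q.val = Aux13.Pset K H
      (⟨Aux13.dowOf K Q.prop.choose, Aux13.isDow_dowOf⟩ : Dow n ↥K) := by
    intro Q
    conv_lhs => rw [Q.prop.choose_spec]
    exact Aux13.stab_eq H _
  refine ⟨⟨fun Q => ⟨Aux13.dowOf K Q.prop.choose, Aux13.isDow_dowOf⟩,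
    fun d => ⟨Aux13.Pset K H d, Aux13.Sof d.val, (Aux13.stab_Sof H d).symm⟩,
    fun Q => ?_, fun d => ?_, ⟩, ?_⟩
  · exact Subtype.ext (hQP Q).symm
  · apply hPinj
    exact (hQP ⟨Aux13.Pset K H d, Aux13.Sof d.val, (Aux13.stab_Sof H d).symm⟩).symm
  · intro P Q
    rw [← hle_iff]
    show P.val ⊆ Q.val ↔ Aux13.Pset K H ⟨Aux13.dowOf K P.prop.choose, Aux13.isDow_dowOf⟩ ⊆
      Aux13.Pset K H ⟨Aux13.dowOf K Q.prop.choose, Aux13.isDow_dowOf⟩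
    rw [← hQP P, ← hQP Q]
end
end

section
/- Let K, H ≤ ℍ^× be finite groups with [K,K] ≤ H ⊴ K and H ≠ {1}, and n ≥ 2. Then the hyperplanes of the reflection arrangement of G_n(K,H) in ℍ^n are exactly ker(x_i) for 1 ≤ i ≤ n and ker(x_i - ζ x_j) for 1 ≤ i ≠ j ≤ n and ζ ∈ K. In particular the arrangement depends only on K and n, not on H. -/
noncomputable section

/-- A quaternionic reflection: an element of finite order with `rk(1 - g) = 1`, i.e. the image
of `1 - g` is a nonzero right line `u·ℍ`. -/
def IsQRefl {n : ℕ} (g : (Matrix (Fin n) (Fin n) Hq)ˣ) : Prop :=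
  IsOfFinOrder g ∧
    ∃ u : Fin n → Hq, u ≠ 0 ∧
      (∀ v, ∃ c : Hq, ((1 : Matrix (Fin n) (Fin n) Hq) - g.val).mulVec v = fun i => u i * c) ∧
      (∃ v, ((1 : Matrix (Fin n) (Fin n) Hq) - g.val).mulVec v ≠ 0)

/-- The fixed hyperplane of `g`. -/
def FixSet {n : ℕ} (g : (Matrix (Fin n) (Fin n) Hq)ˣ) : Set (Fin n → Hq) :=
  {v | g.val.mulVec v = v}

/-! ### Auxiliary machinery -/

/-- The "monomial matrix" with `(i,j)` entry `d i` if `i = σ j` and `0` otherwise. -/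
def gm {n : ℕ} (d : Fin n → Hq) (σ : Equiv.Perm (Fin n)) : Matrix (Fin n) (Fin n) Hq :=
  Matrix.of fun i j => if i = σ j then d i else 0

lemma diag_pmat {n : ℕ} (d : Fin n → Hq) (σ : Equiv.Perm (Fin n)) :
    Matrix.diagonal d * pmat n σ = gm d σ := by
  refine Matrix.ext fun i j => ?_
  rw [Matrix.diagonal_mul]
  simp [pmat, gm, mul_ite]

lemma gm_mulVec {n : ℕ} (d : Fin n → Hq) (σ : Equiv.Perm (Fin n)) (v : Fin n → Hq) (i : Fin n) :
    (gm d σ).mulVec v i = d i * v (σ⁻¹ i) := by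
  rw [Matrix.mulVec, dotProduct]
  rw [Finset.sum_eq_single (σ⁻¹ i)]
  · simp [gm]
  · intro b _ hb
    have : ¬ (i = σ b) := fun h => hb (by simp [h])
    simp [gm, this]
  · simp

lemma gm_mul {n : ℕ} (d e : Fin n → Hq) (σ τ : Equiv.Perm (Fin n)) :
    gm d σ * gm e τ = gm (fun i => d i * e (σ⁻¹ i)) (σ * τ) := by
  refine Matrix.ext fun i j => ?_
  rw [Matrix.mul_apply]
  rw [Finset.sum_eq_single (τ j)]
  · by_cases h : i = σ (τ j)
    · simp [gm, h]
    · simp [gm, h, Equiv.Perm.mul_apply]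
  · intro b _ hb; simp [gm, hb]
  · simp

lemma gm_one {n : ℕ} : gm (fun _ => (1:Hq)) (1 : Equiv.Perm (Fin n)) = 1 := by
  refine Matrix.ext fun i j => ?_
  by_cases h : i = j <;> simp [gm, Matrix.one_apply, h]

/-- The unit of the matrix ring given by an invertible monomial matrix. -/
def mkU {n : ℕ} (d : Fin n → Hq) (σ : Equiv.Perm (Fin n)) (hd : ∀ i, d i ≠ 0) :
    (Matrix (Fin n) (Fin n) Hq)ˣ where
  val := gm d σ
  inv := gm (fun i => (d (σ i))⁻¹) σ⁻¹
  val_inv := by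
    rw [gm_mul]
    have h1 : (fun i => d i * (d (σ (σ⁻¹ i)))⁻¹) = fun _ => (1:Hq) := by
      funext i; rw [← Equiv.Perm.mul_apply, mul_inv_cancel, Equiv.Perm.one_apply, mul_inv_cancel₀ (hd i)]
    rw [h1, mul_inv_cancel, gm_one]
  inv_val := by
    rw [gm_mul]
    have h1 : (fun i => (d (σ i))⁻¹ * d (σ⁻¹⁻¹ i)) = fun _ => (1:Hq) := by
      funext i; rw [inv_inv]; exact inv_mul_cancel₀ (hd (σ i))
    rw [h1, inv_mul_cancel, gm_one]

lemma gm_pow {n : ℕ} (d : Fin n → Hq) (m : ℕ) :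
    (gm d (1 : Equiv.Perm (Fin n))) ^ m = gm (fun i => d i ^ m) 1 := by
  induction m with
  | zero => simp [gm_one]
  | succ m ih =>
    rw [pow_succ, ih, gm_mul, mul_one]
    have h1 : (fun i => d i ^ m * d ((1:Equiv.Perm (Fin n))⁻¹ i)) = fun i => d i ^ (m+1) := by
      funext i; simp [pow_succ]
    rw [h1]

lemma prod_ofFn_single {M : Type*} [Monoid M] : ∀ {n : ℕ} (f : Fin n → M) (i : Fin n),
    (∀ l, l ≠ i → f l = 1) → (List.ofFn f).prod = f i := by
  intro n
  induction n with
  | zero => exact fun f i _ => i.elim0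
  | succ m ih =>
    intro f i hf
    rw [List.ofFn_succ, List.prod_cons]
    by_cases h0 : i = 0
    · subst h0
      have hp : (List.ofFn fun l : Fin m => f l.succ).prod = 1 := by
        apply List.prod_eq_one
        intro x hx
        obtain ⟨y, rfl⟩ := List.mem_ofFn.mp hx
        exact hf _ (Fin.succ_ne_zero y)
      rw [hp, mul_one]
    · obtain ⟨j, rfl⟩ := Fin.eq_succ_of_ne_zero h0
      rw [hf 0 (Ne.symm h0), one_mul]
      exact ih _ j fun l hl => hf _ (fun h => hl (Fin.succ_injective _ h))

lemma prod_ofFn_pair {M : Type*} [Monoid M] : ∀ {n : ℕ} (f : Fin n → M) (i j : Fin n), i < j →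
    (∀ l, l ≠ i → l ≠ j → f l = 1) → (List.ofFn f).prod = f i * f j := by
  intro n
  induction n with
  | zero => exact fun f i _ _ _ => i.elim0
  | succ m ih =>
    intro f i j hij hf
    rw [List.ofFn_succ, List.prod_cons]
    by_cases h0 : i = 0
    · subst h0
      obtain ⟨j', rfl⟩ := Fin.eq_succ_of_ne_zero (Fin.pos_iff_ne_zero.mp hij)
      rw [prod_ofFn_single (fun l : Fin m => f l.succ) j'
        (fun l hl => hf _ (Fin.succ_ne_zero l) (fun h => hl (Fin.succ_injective _ h)))]
    · obtain ⟨i', rfl⟩ := Fin.eq_succ_of_ne_zero h0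
      obtain ⟨j', rfl⟩ := Fin.eq_succ_of_ne_zero
        (Fin.pos_iff_ne_zero.mp (lt_of_le_of_lt (Fin.zero_le _) hij))
      rw [hf 0 (Ne.symm h0) (Fin.succ_ne_zero j').symm, one_mul]
      exact ih _ i' j' (Fin.succ_lt_succ_iff.mp hij)
        fun l hl1 hl2 => hf _ (fun h => hl1 (Fin.succ_injective _ h))
          (fun h => hl2 (Fin.succ_injective _ h))

lemma oneSub_mulVec {n : ℕ} (M : Matrix (Fin n) (Fin n) Hq) (v : Fin n → Hq) (i : Fin n) :
    ((1 : Matrix (Fin n) (Fin n) Hq) - M).mulVec v i = v i - M.mulVec v i := by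
  rw [Matrix.sub_mulVec, Matrix.one_mulVec]
  rfl

/-- for finite `K, H ≤ ℍ^×` with `[K,K] ≤ H ⊴ K`, `H ≠ {1}` and `n ≥ 2`, the
reflection arrangement of `G_n(K,H)` in `ℍⁿ` consists exactly of the hyperplanes `ker(x_i)`,
`1 ≤ i ≤ n`, and `ker(x_i - ζ x_j)`, `i ≠ j`, `ζ ∈ K`; in particular it depends only on `K`
and `n`, not on `H`. -/
theorem stmt14 (n : ℕ) (hn : 2 ≤ n) (K : Subgroup Hqˣ) (hK : Finite ↥K)
    (H : Subgroup ↥K) [H.Normal] (hH : H ≠ ⊥)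
    (hcomm : ∀ a b : ↥K, a * b * a⁻¹ * b⁻¹ ∈ H) :
    {X : Set (Fin n → Hq) | ∃ g, memG K H g ∧ IsQRefl g ∧ X = FixSet g} =
      {X | ∃ i : Fin n, X = {v | v i = 0}} ∪
      {X | ∃ (i j : Fin n) (ζ : ↥K), i ≠ j ∧ X = {v | v i = ((ζ : Hqˣ) : Hq) * v j}} := by
  haveI := hK
  ext X
  simp only [Set.mem_setOf_eq, Set.mem_union]
  constructor
  · rintro ⟨g, ⟨k, σ, -, hval⟩, ⟨-, u, hu0, himg, hnz⟩, rfl⟩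
    set d : Fin n → Hq := fun i => ((k i : Hqˣ) : Hq) with hd
    have hd0 : ∀ i, d i ≠ 0 := fun i => Units.ne_zero _
    have hval' : g.val = gm d σ := by rw [hval, diag_pmat]
    have hcol : ∀ j : Fin n, ∃ c : Hq, ∀ i,
        (if i = j then (1:Hq) else 0) - (if i = σ j then d i else 0) = u i * c := by
      intro j
      obtain ⟨c, hc⟩ := himg (fun l => if l = j then 1 else 0)
      refine ⟨c, fun i => ?_⟩
      have h2 := congrFun hc i
      rw [oneSub_mulVec, hval', gm_mulVec] at h2
      rw [← h2]
      congr 1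
      by_cases h3 : i = σ j
      · have h4 : σ⁻¹ i = j := by rw [h3]; exact σ.symm_apply_apply j
        simp [h3, h4]
      · have h4 : σ⁻¹ i ≠ j := fun h => h3 (by rw [← h, ← Equiv.Perm.mul_apply, mul_inv_cancel, Equiv.Perm.one_apply])
        simp [h3, show σ.symm i ≠ j from h4]
    have hfixiff : ∀ v : Fin n → Hq, v ∈ FixSet g ↔ ∀ l, d l * v (σ⁻¹ l) = v l := by
      intro v
      rw [FixSet, Set.mem_setOf_eq, hval', funext_iff]
      constructor
      · intro hh l; rw [← gm_mulVec d σ v l]; exact hh l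
      · intro hh l; rw [gm_mulVec]; exact hh l
    have step1 : ∀ j, σ j ≠ j →
        u j ≠ 0 ∧ u (σ j) ≠ 0 ∧ ∀ l, l ≠ j → l ≠ σ j → u l = 0 := by
      intro j hj
      obtain ⟨c, hc⟩ := hcol j
      have h1 : (1:Hq) = u j * c := by
        have := hc j
        rwa [if_pos rfl, if_neg (Ne.symm hj), sub_zero] at this
      have huj : u j ≠ 0 := fun h => one_ne_zero (h1.trans (by rw [h, zero_mul]))
      have hcc : c ≠ 0 := fun h => one_ne_zero (h1.trans (by rw [h, mul_zero]))
      refine ⟨huj, ?_, ?_⟩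
      · intro h
        have h2 := hc (σ j)
        rw [if_neg hj, if_pos rfl, zero_sub, h, zero_mul] at h2
        exact hd0 (σ j) (neg_eq_zero.mp h2)
      · intro l hl1 hl2
        have h2 := hc l
        rw [if_neg hl1, if_neg hl2, sub_zero] at h2
        exact (mul_eq_zero.mp h2.symm).resolve_right hcc
    by_cases hσ : σ = 1
    · subst hσ
      simp only [Equiv.Perm.one_apply] at hcol
      have hex : ∃ j, d j ≠ 1 := by
        by_contra hall
        push_neg at hall
        obtain ⟨v, hv⟩ := hnz
        apply hv
        funext i
        rw [oneSub_mulVec, hval', gm_mulVec, inv_one, Equiv.Perm.one_apply, hall i, one_mul,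
          sub_self]
        rfl
      obtain ⟨j0, hj0⟩ := hex
      have hsupp : ∀ j, d j ≠ 1 → u j ≠ 0 ∧ ∀ l, l ≠ j → u l = 0 := by
        intro j hj
        obtain ⟨c, hc⟩ := hcol j
        have h1 : (1:Hq) - d j = u j * c := by
          have := hc j
          simpa using this
        have hdj : (1:Hq) - d j ≠ 0 := sub_ne_zero.mpr (Ne.symm hj)
        have huj : u j ≠ 0 := fun h => hdj (by rw [h1, h, zero_mul])
        have hcc : c ≠ 0 := fun h => hdj (by rw [h1, h, mul_zero])
        refine ⟨huj, fun l hl => ?_⟩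
        have h2 := hc l
        rw [if_neg hl] at h2; simp only [hl, ↓reduceIte, sub_zero] at h2
        exact (mul_eq_zero.mp h2.symm).resolve_right hcc
      have huniq : ∀ j, j ≠ j0 → d j = 1 := by
        intro j hj
        by_contra hdj
        exact (hsupp j0 hj0).1 ((hsupp j hdj).2 j0 (Ne.symm hj))
      left
      refine ⟨j0, ?_⟩
      ext v
      rw [hfixiff]
      simp only [Set.mem_setOf_eq, inv_one, Equiv.Perm.one_apply]
      constructor
      · intro hh
        have h1 : (d j0 - 1) * v j0 = 0 := by
          rw [sub_mul, one_mul, hh j0, sub_self]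
        exact (mul_eq_zero.mp h1).resolve_left (sub_ne_zero.mpr hj0)
      · intro hv l
        by_cases hl : l = j0
        · rw [hl, hv, mul_zero]
        · rw [huniq l hl, one_mul]
    · have hex : ∃ j, σ j ≠ j := by
        by_contra hall
        push_neg at hall
        exact hσ (Equiv.ext fun x => hall x)
      obtain ⟨j0, hj0⟩ := hex
      obtain ⟨hu0', hu1', hvan⟩ := step1 j0 hj0
      have hj1m : σ (σ j0) ≠ σ j0 := fun h => hj0 (σ.injective h)
      obtain ⟨-, -, hvan1⟩ := step1 (σ j0) hj1m
      have hσj1 : σ (σ j0) = j0 := by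
        by_contra hcon
        exact hu0' (hvan1 j0 (Ne.symm hj0) (Ne.symm hcon))
      have hfixpt : ∀ l, l ≠ j0 → l ≠ σ j0 → σ l = l := by
        intro l hl0 hl1
        by_contra hcon
        exact (step1 l hcon).1 (hvan l hl0 hl1)
      have hd1 : ∀ l, l ≠ j0 → l ≠ σ j0 → d l = 1 := by
        intro l hl0 hl1
        by_contra hcon
        obtain ⟨c, hc⟩ := hcol l
        have h1 : (1:Hq) - d l = u l * c := by
          have := hc l
          rwa [if_pos rfl, if_pos (hfixpt l hl0 hl1).symm] at this
        rw [hvan l hl0 hl1, zero_mul] at h1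
        exact (sub_ne_zero.mpr (Ne.symm hcon)) h1
      obtain ⟨c0, hc0⟩ := hcol j0
      obtain ⟨c1, hc1⟩ := hcol (σ j0)
      have e1 : (1:Hq) = u j0 * c0 := by
        have := hc0 j0
        rwa [if_pos rfl, if_neg (Ne.symm hj0), sub_zero] at this
      have e2 : -(d (σ j0)) = u (σ j0) * c0 := by
        have := hc0 (σ j0)
        rwa [if_neg hj0, if_pos rfl, zero_sub] at this
      have e3 : (1:Hq) = u (σ j0) * c1 := by
        have := hc1 (σ j0)
        rw [hσj1] at this
        rwa [if_pos rfl, if_neg hj0, sub_zero] at this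
      have e4 : -(d j0) = u j0 * c1 := by
        have := hc1 j0
        rw [hσj1] at this
        rwa [if_neg (Ne.symm hj0), if_pos rfl, zero_sub] at this
      have hC0 : c0 = (u j0)⁻¹ := eq_inv_of_mul_eq_one_right e1.symm
      have hC1 : c1 = (u (σ j0))⁻¹ := eq_inv_of_mul_eq_one_right e3.symm
      have hdd : d j0 * d (σ j0) = 1 := by
        have hdj0 : d j0 = -(u j0 * c1) := by rw [← e4, neg_neg]
        have hdj1 : d (σ j0) = -(u (σ j0) * c0) := by rw [← e2, neg_neg]
        rw [hdj0, hdj1, hC0, hC1, neg_mul_neg, mul_assoc, ← mul_assoc (u (σ j0))⁻¹,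
          inv_mul_cancel₀ hu1', one_mul, mul_inv_cancel₀ hu0']
      have hddr : d (σ j0) * d j0 = 1 := by
        rw [eq_inv_of_mul_eq_one_right hdd, inv_mul_cancel₀ (hd0 j0)]
      have hinv0 : σ⁻¹ j0 = σ j0 := Equiv.Perm.inv_eq_iff_eq.mpr hσj1.symm
      have hinv1 : σ⁻¹ (σ j0) = j0 := σ.symm_apply_apply j0
      have hσinv : ∀ l, l ≠ j0 → l ≠ σ j0 → σ⁻¹ l = l := fun l h0 h1 =>
        Equiv.Perm.inv_eq_iff_eq.mpr (hfixpt l h0 h1).symm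
      right
      refine ⟨j0, σ j0, k j0, Ne.symm hj0, ?_⟩
      have hdj : ((k j0 : Hqˣ) : Hq) = d j0 := by simp only [hd]
      rw [hdj]
      ext v
      rw [hfixiff]
      simp only [Set.mem_setOf_eq]
      constructor
      · intro hh
        have := hh j0
        rw [hinv0] at this
        exact this.symm
      · intro hv l
        by_cases h0 : l = j0
        · subst h0; rw [hinv0]; exact hv.symm
        by_cases h1 : l = σ j0
        · subst h1
          rw [hinv1, hv, ← mul_assoc, hddr, one_mul]
        · rw [hσinv l h0 h1, hd1 l h0 h1, one_mul]
  · rintro (⟨i, rfl⟩ | ⟨i, j, ζ, hij, rfl⟩)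
    · -- the hyperplane x_i = 0
      obtain ⟨a, ha1⟩ := Subgroup.ne_bot_iff_exists_ne_one.mp hH
      set h : ↥K := (a : ↥K) with hh
      have hmemH : h ∈ H := a.2
      have hne1 : h ≠ 1 := fun hcon => ha1 (by rw [hh] at hcon; exact_mod_cast hcon)
      set hq : Hq := ((h : Hqˣ) : Hq) with hhq
      have hqne1 : hq ≠ 1 := by rw [hhq]; simpa using hne1
      set d : Fin n → Hq := fun l => if l = i then hq else 1 with hdd
      have hd0 : ∀ l, d l ≠ 0 := by
        intro l
        by_cases hl : l = i
        · simp only [hdd, if_pos hl, hhq]; exact Units.ne_zero _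
        · simp only [hdd, if_neg hl]; exact one_ne_zero
      refine ⟨mkU d 1 hd0, ⟨fun l => if l = i then h else 1, 1, ?_, ?_⟩, ⟨?_, ?_⟩, ?_⟩
      · rw [prod_ofFn_single _ i (fun l hl => if_neg hl)]
        simpa using hmemH
      · rw [diag_pmat]
        have hfun : (fun l : Fin n => (((if l = i then h else 1 : ↥K) : Hqˣ) : Hq)) = d := by
          funext l
          by_cases hl : l = i <;> simp [hdd, hl, hhq]
        rw [hfun]
        rfl
      · -- finite order
        rw [isOfFinOrder_iff_pow_eq_one]
        refine ⟨orderOf h, orderOf_pos h, ?_⟩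
        ext1
        rw [Units.val_pow_eq_pow_val]
        show (gm d 1) ^ orderOf h = (1 : Matrix (Fin n) (Fin n) Hq)
        rw [gm_pow]
        have h1 : (fun l => d l ^ orderOf h) = fun _ => (1:Hq) := by
          funext l
          by_cases hl : l = i
          · simp only [hdd, if_pos hl, hhq]
            rw [← Units.val_pow_eq_pow_val, ← SubmonoidClass.coe_pow, pow_orderOf_eq_one h]
            simp
          · simp only [hdd, if_neg hl, one_pow]
        rw [h1, gm_one]
      · -- reflection data
        refine ⟨fun l => if l = i then 1 - hq else 0, ?_, ?_, ?_⟩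
        · intro hcon
          have := congrFun hcon i
          rw [if_pos rfl] at this
          exact (sub_ne_zero.mpr (Ne.symm hqne1)) this
        · intro v
          refine ⟨v i, ?_⟩
          funext l
          rw [oneSub_mulVec]
          show v l - (gm d 1).mulVec v l = _
          rw [gm_mulVec, inv_one, Equiv.Perm.one_apply]
          by_cases hl : l = i
          · subst hl
            simp [hdd, sub_mul]
          · simp [hdd, hl]
        · refine ⟨fun l => if l = i then 1 else 0, fun hcon => ?_⟩
          have := congrFun hcon i
          rw [oneSub_mulVec] at this
          revert this
          show ¬((if i = i then (1:Hq) else 0) - (gm d 1).mulVec _ i = 0)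
          rw [gm_mulVec, inv_one, Equiv.Perm.one_apply]
          simp only [hdd, eq_self_iff_true, if_true, mul_one]
          exact sub_ne_zero.mpr (Ne.symm hqne1)
      · -- the fixed set
        ext v
        simp only [Set.mem_setOf_eq, FixSet]
        constructor
        · intro hv
          show (gm d 1).mulVec v = v
          funext l
          rw [gm_mulVec, inv_one, Equiv.Perm.one_apply]
          by_cases hl : l = i
          · subst hl
            rw [hv, mul_zero]
          · simp only [hdd, if_neg hl, one_mul]
        · intro hv
          have := congrFun hv i
          rw [show (mkU d 1 hd0).val = gm d 1 from rfl, gm_mulVec, inv_one,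
            Equiv.Perm.one_apply] at this
          simp only [hdd, if_pos rfl] at this
          have h1 : (hq - 1) * v i = 0 := by rw [sub_mul, one_mul, this, sub_self]
          exact (mul_eq_zero.mp h1).resolve_left (sub_ne_zero.mpr hqne1)
    · -- the hyperplane x_i = ζ x_j
      set ζ' : Hq := ((ζ : Hqˣ) : Hq) with hζ'
      have hζ0 : ζ' ≠ 0 := Units.ne_zero _
      set kk : Fin n → ↥K := fun l => if l = i then ζ else if l = j then ζ⁻¹ else 1 with hkk
      set d : Fin n → Hq := fun l => ((kk l : Hqˣ) : Hq) with hdd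
      have hd0 : ∀ l, d l ≠ 0 := fun l => Units.ne_zero _
      have hdi : d i = ζ' := by simp [hdd, hkk, hζ']
      have hdj : d j = ζ'⁻¹ := by
        simp only [hdd, hkk, if_neg (Ne.symm hij), eq_self_iff_true, if_true, hζ']
        simp [Units.val_inv_eq_inv_val]
      have hdl : ∀ l, l ≠ i → l ≠ j → d l = 1 := by
        intro l h1 h2
        simp [hdd, hkk, h1, h2]
      set σ : Equiv.Perm (Fin n) := Equiv.swap i j with hσ
      have hσi : σ i = j := Equiv.swap_apply_left i j
      have hσj : σ j = i := Equiv.swap_apply_right i j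
      have hσl : ∀ l, l ≠ i → l ≠ j → σ l = l := fun l h1 h2 =>
        Equiv.swap_apply_of_ne_of_ne h1 h2
      have hσinv : σ⁻¹ = σ := Equiv.swap_inv i j
      refine ⟨mkU d σ hd0, ⟨kk, σ, ?_, ?_⟩, ⟨?_, ?_⟩, ?_⟩
      · -- the product is 1 ∈ H
        rcases lt_or_gt_of_ne hij with hlt | hgt
        · rw [prod_ofFn_pair kk i j hlt (fun l h1 h2 => by simp [hkk, h1, h2])]
          simp only [hkk, eq_self_iff_true, if_true, if_neg (Ne.symm hij)]
          rw [mul_inv_cancel]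
          exact H.one_mem
        · rw [prod_ofFn_pair kk j i hgt (fun l h1 h2 => by simp [hkk, h1, h2])]
          simp only [hkk, eq_self_iff_true, if_true, if_neg (Ne.symm hij)]
          rw [inv_mul_cancel]
          exact H.one_mem
      · rw [diag_pmat]
        rfl
      · -- finite order : g² = 1
        rw [isOfFinOrder_iff_pow_eq_one]
        refine ⟨2, two_pos, ?_⟩
        ext1
        rw [Units.val_pow_eq_pow_val]
        show (gm d σ) ^ 2 = (1 : Matrix (Fin n) (Fin n) Hq)
        rw [pow_two, gm_mul, hσinv]
        have h1 : (fun l => d l * d (σ l)) = fun _ => (1:Hq) := by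
          funext l
          by_cases h1 : l = i
          · subst h1; rw [hσi, hdi, hdj, mul_inv_cancel₀ hζ0]
          by_cases h2 : l = j
          · subst h2; rw [hσj, hdi, hdj, inv_mul_cancel₀ hζ0]
          · rw [hσl l h1 h2, hdl l h1 h2, one_mul]
        rw [h1, hσ, Equiv.swap_mul_self, gm_one]
      · -- reflection data
        refine ⟨fun l => if l = i then 1 else if l = j then -ζ'⁻¹ else 0, ?_, ?_, ?_⟩
        · intro hcon
          have := congrFun hcon i
          rw [if_pos rfl] at this
          exact one_ne_zero this
        · intro v
          refine ⟨v i - ζ' * v j, ?_⟩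
          funext l
          rw [oneSub_mulVec]
          show v l - (gm d σ).mulVec v l = _
          rw [gm_mulVec, hσinv]
          beta_reduce
          by_cases h1 : l = i
          · subst h1
            rw [hσi, hdi, if_pos rfl, one_mul]
          by_cases h2 : l = j
          · subst h2
            rw [hσj, hdj, if_neg h1, if_pos rfl, neg_mul, mul_sub, ← mul_assoc,
              inv_mul_cancel₀ hζ0, one_mul, neg_sub]
          · rw [hσl l h1 h2, hdl l h1 h2, one_mul, sub_self, if_neg h1, if_neg h2, zero_mul]
        · refine ⟨fun l => if l = i then 1 else 0, fun hcon => ?_⟩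
          have := congrFun hcon i
          rw [oneSub_mulVec] at this
          revert this
          show ¬((if i = i then (1:Hq) else 0) - (gm d σ).mulVec _ i = 0)
          rw [gm_mulVec, hσinv, hσi, hdi, if_pos rfl, if_neg (Ne.symm hij), mul_zero, sub_zero]
          exact one_ne_zero
      · -- the fixed set
        ext v
        simp only [Set.mem_setOf_eq, FixSet]
        constructor
        · intro hv
          show (gm d σ).mulVec v = v
          funext l
          rw [gm_mulVec, hσinv]
          by_cases h1 : l = i
          · subst h1
            rw [hσi, hdi]
            exact hv.symm
          by_cases h2 : l = j
          · subst h2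
            rw [hσj, hdj, hv, ← mul_assoc, inv_mul_cancel₀ hζ0, one_mul]
          · rw [hσl l h1 h2, hdl l h1 h2, one_mul]
        · intro hv
          have := congrFun hv i
          rw [show (mkU d σ hd0).val = gm d σ from rfl, gm_mulVec, hσinv, hσi, hdi] at this
          exact this.symm
end
end

section
/- Every parabolic subgroup of G_n(K,H) equals P_{(I₀,Π,ξ)} for some parabolic triple: a subset I₀ ⊆ {1,…,n}, a partition Π = (I₁,…,I_d) of the complement of I₀, and a function ξ : {1,…,n}∖I₀ → K; here P_{(I₀,Π,ξ)} = P₀ × P₁ × ⋯ × P_d where P₀ = G_{|I₀|}(K,H) acts on the coordinates in I₀ and each P_i is the symmetric group permuting the vectors {ξ(j) e_j : j ∈ I_i}. -/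
noncomputable section

/-- The group `P_{(I₀,Π,ξ)} = P₀ × P₁ × ⋯ × P_d` attached to a parabolic triple: elements of
`G_n(K,H)` which preserve `I₀` (acting there as `G_{|I₀|}(K,H)`) and permute, for each block
`I_l` of `Π`, the vectors `{ξ(j)e_j : j ∈ I_l}` (acting there as the symmetric group). -/
def PTriple {n : ℕ} (K : Subgroup Hqˣ) (H : Subgroup ↥K) (I₀ : Finset (Fin n)) (d : ℕ)
    (P : Fin d → Finset (Fin n)) (ξ : Fin n → ↥K) : Set (Matrix (Fin n) (Fin n) Hq)ˣ :=
  {g | ∃ (k : Fin n → ↥K) (σ : Equiv.Perm (Fin n)), (List.ofFn k).prod ∈ H ∧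
        g.val = (Matrix.diagonal fun i => ((k i : Hqˣ) : Hq)) * pmat n σ ∧
        (∀ i ∈ I₀, σ i ∈ I₀) ∧
        (∀ l : Fin d, ∀ j ∈ P l, σ j ∈ P l ∧ k (σ j) * ξ j = ξ (σ j))}

open scoped Classical

namespace S15
variable {n : ℕ}

/-- `rel a b` : coordinate `b` is a left `K`-multiple of coordinate `a` on `S`. -/
def rel (K : Subgroup Hqˣ) (S : Set (Fin n → Hq)) (a b : Fin n) : Prop :=
  ∃ κ : K, ∀ v ∈ S, v b = ((κ : Hqˣ) : Hq) * v a

variable {K : Subgroup Hqˣ} {S : Set (Fin n → Hq)}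

lemma rel_refl (a : Fin n) : rel K S a a := ⟨1, by simp⟩

lemma rel_symm {a b} (h : rel K S a b) : rel K S b a := by
  obtain ⟨κ, hκ⟩ := h
  refine ⟨κ⁻¹, fun v hv => ?_⟩
  rw [hκ v hv, ← mul_assoc]
  have h1 : ((κ⁻¹ : K) : Hqˣ) * (κ : Hqˣ) = 1 := by
    norm_cast; exact inv_mul_cancel κ
  rw [← Units.val_mul, h1, Units.val_one, one_mul]

lemma rel_trans {a b c} (h : rel K S a b) (h' : rel K S b c) : rel K S a c := by
  obtain ⟨κ, hκ⟩ := h; obtain ⟨κ', hκ'⟩ := h'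
  refine ⟨κ' * κ, fun v hv => ?_⟩
  rw [hκ' v hv, hκ v hv]
  push_cast
  rw [mul_assoc]

def I0 (K : Subgroup Hqˣ) (S : Set (Fin n → Hq)) : Finset (Fin n) :=
  Finset.univ.filter (fun j => ∀ v ∈ S, v j = 0)

def T (K : Subgroup Hqˣ) (S : Set (Fin n → Hq)) : Finset (Fin n) := (I0 K S)ᶜ

lemma mem_I0 {j : Fin n} : j ∈ I0 K S ↔ ∀ v ∈ S, v j = 0 := by
  simp [I0]

lemma mem_T {j : Fin n} : j ∈ T K S ↔ ∃ v ∈ S, v j ≠ 0 := by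
  simp [T, mem_I0, I0]

lemma mem_T_of_rel {a b : Fin n} (h : rel K S a b) (ha : a ∈ T K S) : b ∈ T K S := by
  obtain ⟨κ, hκ⟩ := h
  obtain ⟨v, hv, hva⟩ := mem_T.1 ha
  refine mem_T.2 ⟨v, hv, ?_⟩
  rw [hκ v hv]
  exact mul_ne_zero (Units.ne_zero _) hva

def cls (K : Subgroup Hqˣ) (S : Set (Fin n → Hq)) (j : Fin n) : Finset (Fin n) :=
  (T K S).filter (rel K S j)

lemma mem_cls {x j : Fin n} : x ∈ cls K S j ↔ x ∈ T K S ∧ rel K S j x := by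
  simp [cls]

lemma cls_eq_of_rel {a b : Fin n} (h : rel K S a b) : cls K S a = cls K S b := by
  ext x
  simp only [mem_cls, and_congr_right_iff]
  exact fun _ => ⟨fun h' => rel_trans (rel_symm h) h', fun h' => rel_trans h h'⟩

lemma self_mem_cls {j : Fin n} (hj : j ∈ T K S) : j ∈ cls K S j :=
  mem_cls.2 ⟨hj, rel_refl j⟩

def rep (K : Subgroup Hqˣ) (S : Set (Fin n → Hq)) (j : Fin n) : Fin n :=
  if h : j ∈ T K S then (cls K S j).min' ⟨j, self_mem_cls h⟩ else j

lemma rep_mem_cls {j : Fin n} (hj : j ∈ T K S) : rep K S j ∈ cls K S j := by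
  rw [rep, dif_pos hj]
  exact Finset.min'_mem _ _

lemma rep_eq_of_mem_cls {x j : Fin n} (hj : j ∈ T K S) (hx : x ∈ cls K S j) :
    rep K S x = rep K S j := by
  obtain ⟨hxT, hrel⟩ := mem_cls.1 hx
  rw [rep, rep, dif_pos hxT, dif_pos hj]
  congr 1
  exact (cls_eq_of_rel hrel).symm

lemma rel_rep {j : Fin n} (hj : j ∈ T K S) : rel K S (rep K S j) j :=
  rel_symm (mem_cls.1 (rep_mem_cls hj)).2

def xi (K : Subgroup Hqˣ) (S : Set (Fin n → Hq)) (j : Fin n) : K :=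
  if h : j ∈ T K S then (rel_rep h).choose else 1

lemma xi_spec {j : Fin n} (hj : j ∈ T K S) :
    ∀ v ∈ S, v j = ((xi K S j : Hqˣ) : Hq) * v (rep K S j) := by
  rw [xi, dif_pos hj]
  exact (rel_rep hj).choose_spec

def Cl (K : Subgroup Hqˣ) (S : Set (Fin n → Hq)) : Finset (Finset (Fin n)) :=
  (T K S).image (cls K S)

def dnum (K : Subgroup Hqˣ) (S : Set (Fin n → Hq)) : ℕ := (Cl K S).card

def Pfun (K : Subgroup Hqˣ) (S : Set (Fin n → Hq)) (l : Fin (dnum K S)) : Finset (Fin n) :=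
  ((Cl K S).equivFin.symm l : (Cl K S)).1

lemma Pfun_mem (l : Fin (dnum K S)) : Pfun K S l ∈ Cl K S :=
  ((Cl K S).equivFin.symm l).2

lemma Pfun_eq_cls {x : Fin n} {l} (hx : x ∈ Pfun K S l) :
    x ∈ T K S ∧ cls K S x = Pfun K S l := by
  obtain ⟨j, hj, hcl⟩ := Finset.mem_image.1 (Pfun_mem l)
  rw [← hcl] at hx
  obtain ⟨hxT, hrel⟩ := mem_cls.1 hx
  exact ⟨hxT, by rw [← hcl, cls_eq_of_rel hrel]⟩

lemma exists_Pfun {x : Fin n} (hx : x ∈ T K S) : ∃ l, x ∈ Pfun K S l := by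
  have hmem : cls K S x ∈ Cl K S := Finset.mem_image_of_mem _ hx
  refine ⟨(Cl K S).equivFin ⟨cls K S x, hmem⟩, ?_⟩
  have : Pfun K S ((Cl K S).equivFin ⟨cls K S x, hmem⟩) = cls K S x := by
    simp only [Pfun, Equiv.symm_apply_apply]
  rw [this]
  exact self_mem_cls hx

lemma Pfun_nonempty (l : Fin (dnum K S)) : (Pfun K S l).Nonempty := by
  obtain ⟨j, hj, hcl⟩ := Finset.mem_image.1 (Pfun_mem l)
  exact ⟨j, by rw [← hcl]; exact self_mem_cls hj⟩

lemma Pfun_disjoint {l₁ l₂ : Fin (dnum K S)} (h : l₁ ≠ l₂) :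
    Disjoint (Pfun K S l₁) (Pfun K S l₂) := by
  rw [Finset.disjoint_left]
  intro x hx1 hx2
  have e1 := (Pfun_eq_cls hx1).2
  have e2 := (Pfun_eq_cls hx2).2
  apply h
  have : ((Cl K S).equivFin.symm l₁ : (Cl K S)) = (Cl K S).equivFin.symm l₂ :=
    Subtype.ext (by rw [← e1, ← e2] : Pfun K S l₁ = Pfun K S l₂)
  exact (Cl K S).equivFin.symm.injective this

lemma I0_disjoint_Pfun (l : Fin (dnum K S)) : Disjoint (I0 K S) (Pfun K S l) := by
  rw [Finset.disjoint_left]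
  intro x hx hxP
  have := (Pfun_eq_cls hxP).1
  rw [T, Finset.mem_compl] at this
  exact this hx

lemma mulVec_eq (k : Fin n → K) (σ : Equiv.Perm (Fin n)) (v : Fin n → Hq) :
    ((Matrix.diagonal fun i => ((k i : Hqˣ) : Hq)) * pmat n σ).mulVec v
      = fun i => ((k i : Hqˣ) : Hq) * v (σ⁻¹ i) := by
  funext i
  rw [← Matrix.mulVec_mulVec, Matrix.mulVec_diagonal]
  congr 1
  show ∑ j, (if i = σ j then (1:Hq) else 0) * v j = v (σ⁻¹ i)
  have : ∀ j : Fin n, (if i = σ j then (1:Hq) else 0) * v j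
      = if j = σ⁻¹ i then v j else 0 := by
    intro j
    by_cases h : i = σ j
    · rw [if_pos h, if_pos, one_mul]
      rw [h]; simp
    · rw [if_neg h, if_neg, zero_mul]
      intro hc; apply h; rw [hc]; simp
  rw [Finset.sum_congr rfl (fun j _ => this j), Finset.sum_ite_eq' Finset.univ]
  simp

lemma fix_iff (k : Fin n → K) (σ : Equiv.Perm (Fin n)) (v : Fin n → Hq) :
    ((Matrix.diagonal fun i => ((k i : Hqˣ) : Hq)) * pmat n σ).mulVec v = v
      ↔ ∀ j, ((k (σ j) : Hqˣ) : Hq) * v j = v (σ j) := by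
  rw [mulVec_eq]
  constructor
  · intro h j
    have := congrFun h (σ j)
    simpa using this
  · intro h
    funext i
    have := h (σ⁻¹ i)
    simpa using this

end S15

/-- every parabolic subgroup of `G_n(K,H)` (pointwise stabilizer of a subset of
`ℍⁿ`) equals `P_{(I₀,Π,ξ)}` for some parabolic triple `(I₀, Π, ξ)`. -/
theorem stmt15 (n : ℕ) (K : Subgroup Hqˣ) (hK : Finite ↥K)
    (H : Subgroup ↥K) [H.Normal]
    (hcomm : ∀ a b : ↥K, a * b * a⁻¹ * b⁻¹ ∈ H)
    (S : Set (Fin n → Hq)) :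
    ∃ (I₀ : Finset (Fin n)) (d : ℕ) (P : Fin d → Finset (Fin n)) (ξ : Fin n → ↥K),
      (∀ l, (P l).Nonempty) ∧
      (∀ l₁ l₂, l₁ ≠ l₂ → Disjoint (P l₁) (P l₂)) ∧
      (∀ l, Disjoint I₀ (P l)) ∧
      (I₀ ∪ Finset.univ.biUnion P = Finset.univ) ∧
      stabSet K H S = PTriple K H I₀ d P ξ := by
  classical
  refine ⟨S15.I0 K S, S15.dnum K S, S15.Pfun K S, S15.xi K S,
    S15.Pfun_nonempty, fun l₁ l₂ h => S15.Pfun_disjoint h, S15.I0_disjoint_Pfun, ?_, ?_⟩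
  · ext x
    simp only [Finset.mem_union, Finset.mem_biUnion, Finset.mem_univ, iff_true]
    by_cases hx : x ∈ S15.I0 K S
    · exact Or.inl hx
    · right
      obtain ⟨l, hl⟩ := S15.exists_Pfun (show x ∈ S15.T K S from Finset.mem_compl.2 hx)
      exact ⟨l, trivial, hl⟩
  · ext g
    constructor
    · rintro ⟨⟨k, σ, hH, hval⟩, hfix⟩
      have hfix' : ∀ v ∈ S, ∀ j, ((k (σ j) : Hqˣ) : Hq) * v j = v (σ j) := by
        intro v hv
        exact (S15.fix_iff k σ v).1 (hval ▸ hfix v hv)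
      refine ⟨k, σ, hH, hval, ?_, ?_⟩
      · intro i hi
        rw [S15.mem_I0] at hi ⊢
        intro v hv
        rw [← hfix' v hv i, hi v hv, mul_zero]
      · intro l j hj
        obtain ⟨hjT, hcls⟩ := S15.Pfun_eq_cls hj
        have hrel : S15.rel K S j (σ j) := ⟨k (σ j), fun v hv => (hfix' v hv j).symm⟩
        have hσT : σ j ∈ S15.T K S := S15.mem_T_of_rel hrel hjT
        have hσcls : σ j ∈ S15.cls K S j := S15.mem_cls.2 ⟨hσT, hrel⟩
        have hσP : σ j ∈ S15.Pfun K S l := hcls ▸ hσcls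
        refine ⟨hσP, ?_⟩
        have hrepeq : S15.rep K S (σ j) = S15.rep K S j := S15.rep_eq_of_mem_cls hjT hσcls
        have hrT : S15.rep K S j ∈ S15.T K S := (S15.mem_cls.1 (S15.rep_mem_cls hjT)).1
        obtain ⟨v, hv, hvr⟩ := S15.mem_T.1 hrT
        have e1 := S15.xi_spec hjT v hv
        have e2 := S15.xi_spec hσT v hv
        rw [hrepeq] at e2
        have e3 := hfix' v hv j
        rw [e1, e2, ← mul_assoc] at e3
        have e4 := mul_right_cancel₀ hvr e3
        exact_mod_cast e4
    · rintro ⟨k, σ, hH, hval, hI, hP⟩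
      refine ⟨⟨k, σ, hH, hval⟩, ?_⟩
      intro v hv
      rw [hval, S15.fix_iff]
      intro j
      by_cases hj : j ∈ S15.I0 K S
      · rw [S15.mem_I0.1 hj v hv, S15.mem_I0.1 (hI j hj) v hv, mul_zero]
      · have hjT : j ∈ S15.T K S := Finset.mem_compl.2 hj
        obtain ⟨l, hl⟩ := S15.exists_Pfun hjT
        obtain ⟨hσP, hkeq⟩ := hP l j hl
        obtain ⟨hσT, hσcls⟩ := S15.Pfun_eq_cls hσP
        obtain ⟨hjT', hjcls⟩ := S15.Pfun_eq_cls hl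
        have hσmem : σ j ∈ S15.cls K S j := by rw [hjcls]; exact hσP
        have hrepeq : S15.rep K S (σ j) = S15.rep K S j :=
          S15.rep_eq_of_mem_cls hjT hσmem
        rw [S15.xi_spec hjT v hv, S15.xi_spec hσT v hv, hrepeq, ← mul_assoc]
        congr 1
        exact_mod_cast hkeq
end
end
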